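/- arXiv:1309.0557 — 2 statements merged into one kernel-verified Lean document; each statement's English description precedes it below -/
import Mathlib

section
/- Let d ≥ 1, let b be a real number with b > (d−1)/2, let m ≥ d−1 be an integer, and let s ≥ 0. Suppose that for every k ≥ 0 and every partition ι of k into not more than d parts we are given a complex number z_ι and a real number c_ι ≥ 0 such that |z_ι| ≤ c_ι and, for every k ≥ 0, Σ_{|ι|=k} c_ι = s^k (the sum being over all partitions of k into not more than d parts; for k = 0 only the zero partition, with coefficient (b)_∅ = 1). Then the double series Σ_{k=0}^∞ Σ_{|ι|=k} z_ι / (k! (b)_ι) converges absolutely, and the tail satisfies | Σ_{k=m+1}^∞ Σ_{|ι|=k} z_ι / (k! (b)_ι) | ≤ s^{m+1} e^{s} / ((m+1)! (b)_{î(m+1)}), where î(m+1) is the lexicographically smallest partition of m+1 into not more than d parts. -/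
/-- `ι : Fin d → ℕ` is a partition of `k` into not more than `d` parts:
its parts are nonincreasing and sum to `k`. -/
def IsPartitionOf (d k : ℕ) (ι : Fin d → ℕ) : Prop :=
  Antitone ι ∧ ∑ j, ι j = k

/-- Strict lexicographic order on tuples: `ι` is lexicographically smaller than `ι'`. -/
def LexLt {d : ℕ} (ι ι' : Fin d → ℕ) : Prop :=
  ∃ i : Fin d, ι i < ι' i ∧ ∀ j : Fin d, j < i → ι j = ι' j

/-- `ι` is the lexicographically smallest partition of `k` into not more than `d` parts. -/
def IsSmallestPartition (d k : ℕ) (ι : Fin d → ℕ) : Prop :=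
  IsPartitionOf d k ι ∧ ∀ ι' : Fin d → ℕ, IsPartitionOf d k ι' → ι' ≠ ι → LexLt ι ι'

/-- The generalized hypergeometric coefficient `(b)_ι = ∏_{j=1}^d (b - (j-1)/2)_{k_j}`,
where `(a)_m` is the rising factorial (with `0`-based indexing for `Fin d`). -/
noncomputable def hgCoeff (d : ℕ) (b : ℝ) (ι : Fin d → ℕ) : ℝ :=
  ∏ j : Fin d, (ascPochhammer ℝ (ι j)).eval (b - (j : ℕ) / 2)

open scoped Classical in
/-- The (finite) set of all partitions of `k` into not more than `d` parts.
(Every part of such a partition is at most `k`, so the ambient box `[0,k]^d` suffices.) -/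
noncomputable def partitionFinset (d k : ℕ) : Finset (Fin d → ℕ) :=
  (Fintype.piFinset fun _ : Fin d => Finset.range (k + 1)).filter fun ι =>
    IsPartitionOf d k ι

open Finset

lemma mem_partitionFinset {d k : ℕ} {ι : Fin d → ℕ} :
    ι ∈ partitionFinset d k ↔ IsPartitionOf d k ι := by
  classical
  unfold partitionFinset
  rw [Finset.mem_filter]
  constructor
  · exact fun h => h.2
  · intro h
    refine ⟨Fintype.mem_piFinset.mpr fun j => Finset.mem_range.mpr ?_, h⟩
    have h1 : ι j ≤ ∑ l, ι l := Finset.single_le_sum (fun i _ => Nat.zero_le _) (Finset.mem_univ j)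
    rw [h.2] at h1; omega

lemma hgCoeff_pos {d : ℕ} {b : ℝ} (hb : ((d : ℝ) - 1) / 2 < b) (ι : Fin d → ℕ) :
    0 < hgCoeff d b ι := by
  apply Finset.prod_pos
  intro j _
  apply ascPochhammer_pos
  have hj : ((j : ℕ) : ℝ) ≤ (d : ℝ) - 1 := by
    have := j.2
    have : ((j : ℕ) : ℝ) + 1 ≤ (d : ℝ) := by exact_mod_cast this
    linarith
  linarith

lemma base_pos {d : ℕ} {b : ℝ} (hb : ((d : ℝ) - 1) / 2 < b) (j : Fin d) :
    0 < b - (j : ℕ) / 2 := by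
  have hj : ((j : ℕ) : ℝ) ≤ (d : ℝ) - 1 := by
    have := j.2
    have : ((j : ℕ) : ℝ) + 1 ≤ (d : ℝ) := by exact_mod_cast this
    linarith
  linarith

lemma ascPoch_succ_eval (n : ℕ) (t : ℝ) :
    (ascPochhammer ℝ (n + 1)).eval t = (ascPochhammer ℝ n).eval t * (t + n) := by
  rw [ascPochhammer_succ_right]
  simp [Polynomial.eval_mul]

/-- Moving one unit from part `i` to part `j`. -/
lemma move_lemma {d : ℕ} {b : ℝ} (hb : ((d : ℝ) - 1) / 2 < b) {ι : Fin d → ℕ}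
    (hanti : Antitone ι) {i j : Fin d} (hij : i < j)
    (hgap : ι j + 2 ≤ ι i)
    (hii : ∀ l, i < l → ι l < ι i)
    (hjj : ∀ l, l < j → ι j < ι l) :
    ∃ ι' : Fin d → ℕ, Antitone ι' ∧ (∑ l, ι' l) = (∑ l, ι l) ∧
      (∑ l : Fin d, (d - 1 - l.val) * ι' l) < (∑ l : Fin d, (d - 1 - l.val) * ι l) ∧
      hgCoeff d b ι' ≤ hgCoeff d b ι := by
  classical
  have hne : i ≠ j := ne_of_lt hij
  set ι' : Fin d → ℕ := Function.update (Function.update ι i (ι i - 1)) j (ι j + 1) with hι'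
  have hι'j : ι' j = ι j + 1 := by simp [hι']
  have hι'i : ι' i = ι i - 1 := by
    simp [hι', Function.update_of_ne hne]
  have hι'o : ∀ l, l ≠ i → l ≠ j → ι' l = ι l := by
    intro l hli hlj
    simp [hι', Function.update_of_ne hlj, Function.update_of_ne hli]
  have hanti' : Antitone ι' := by
    intro a c hac
    rcases eq_or_lt_of_le hac with h | h
    · subst h; exact le_rfl
    by_cases hci : c = i
    · have h2 : a < i := hci ▸ h
      have hai : a ≠ i := ne_of_lt h2
      have haj : a ≠ j := ne_of_lt (lt_trans h2 hij)
      rw [hci, hι'i, hι'o a hai haj]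
      have := hanti (le_of_lt h2)
      omega
    by_cases hcj : c = j
    · have h2 : a < j := hcj ▸ h
      rw [hcj, hι'j]
      by_cases hai : a = i
      · rw [hai, hι'i]; omega
      · have haj : a ≠ j := ne_of_lt h2
        rw [hι'o a hai haj]
        have := hjj a h2
        omega
    · rw [hι'o c hci hcj]
      by_cases hai : a = i
      · have h2 : i < c := hai ▸ h
        rw [hai, hι'i]
        have := hii c h2
        omega
      by_cases haj : a = j
      · rw [haj, hι'j]
        have h3 := hanti hac
        rw [haj] at h3
        omega
      · rw [hι'o a hai haj]
        exact hanti hac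
  have hsum : (∑ l, ι' l) = (∑ l, ι l) := by
    have key : ∀ l, ι' l + (if l = i then 1 else 0) = ι l + (if l = j then 1 else 0) := by
      intro l
      by_cases hli : l = i
      · rw [hli, hι'i, if_pos rfl, if_neg hne]; omega
      by_cases hlj : l = j
      · rw [hlj, hι'j, if_neg (Ne.symm hne), if_pos rfl]
      · rw [hι'o l hli hlj, if_neg hli, if_neg hlj]
    have h2 := Finset.sum_congr rfl (fun l (_ : l ∈ Finset.univ) => key l)
    rw [Finset.sum_add_distrib, Finset.sum_add_distrib] at h2
    simp only [Finset.sum_ite_eq', Finset.mem_univ, if_true] at h2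
    omega
  have hmu : (∑ l : Fin d, (d - 1 - l.val) * ι' l) < (∑ l : Fin d, (d - 1 - l.val) * ι l) := by
    have key : ∀ l : Fin d, (d - 1 - l.val) * ι' l + (if l = i then (d - 1 - i.val) else 0)
        = (d - 1 - l.val) * ι l + (if l = j then (d - 1 - j.val) else 0) := by
      intro l
      by_cases hli : l = i
      · rw [hli, hι'i, if_pos rfl, if_neg hne]
        have h1 : 1 ≤ ι i := by omega
        have h2 : (d - 1 - i.val) * (ι i - 1) + (d - 1 - i.val) = (d - 1 - i.val) * ι i := by
          rw [← Nat.mul_succ]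
          congr 1
          omega
        omega
      by_cases hlj : l = j
      · rw [hlj, hι'j, if_neg (Ne.symm hne), if_pos rfl]; ring
      · rw [hι'o l hli hlj, if_neg hli, if_neg hlj]
    have h2 := Finset.sum_congr rfl (fun l (_ : l ∈ Finset.univ) => key l)
    rw [Finset.sum_add_distrib, Finset.sum_add_distrib] at h2
    simp only [Finset.sum_ite_eq', Finset.mem_univ, if_true] at h2
    have hji : i.val < j.val := hij
    have hjd : j.val ≤ d - 1 := by have := j.2; omega
    omega
  refine ⟨ι', hanti', hsum, hmu, ?_⟩
  set x : ℝ := b - i.val / 2 + ((ι i : ℝ) - 1) with hx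
  set y : ℝ := b - j.val / 2 + (ι j : ℝ) with hy
  have hkey : hgCoeff d b ι' * x = hgCoeff d b ι * y := by
    have key : ∀ l : Fin d, (ascPochhammer ℝ (ι' l)).eval (b - l.val / 2) *
        (if l = i then x else 1)
        = (ascPochhammer ℝ (ι l)).eval (b - l.val / 2) * (if l = j then y else 1) := by
      intro l
      by_cases hli : l = i
      · rw [hli, hι'i, if_pos rfl, if_neg hne, mul_one]
        have h1 : ι i = (ι i - 1) + 1 := by omega
        conv_rhs => rw [h1]
        rw [ascPoch_succ_eval]
        have h3 : ((ι i - 1 : ℕ) : ℝ) = (ι i : ℝ) - 1 := by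
          have : 1 ≤ ι i := by omega
          push_cast [this]
          ring
        rw [h3, hx]
      by_cases hlj : l = j
      · rw [hlj, hι'j, if_neg (Ne.symm hne), if_pos rfl, ascPoch_succ_eval, hy, mul_one]
      · rw [hι'o l hli hlj, if_neg hli, if_neg hlj]
    have h2 := Finset.prod_congr rfl (fun l (_ : l ∈ Finset.univ) => key l)
    rw [Finset.prod_mul_distrib, Finset.prod_mul_distrib] at h2
    simp only [Finset.prod_ite_eq', Finset.mem_univ, if_true] at h2
    exact h2
  have hbj : 0 < b - j.val / 2 := base_pos hb j
  have hy0 : 0 < y := by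
    rw [hy]
    have : (0 : ℝ) ≤ (ι j : ℝ) := Nat.cast_nonneg _
    linarith
  have hyx : y ≤ x := by
    rw [hx, hy]
    have hij' : (i.val : ℝ) ≤ (j.val : ℝ) := by
      exact_mod_cast le_of_lt (show i.val < j.val from hij)
    have : (ι j : ℝ) + 2 ≤ (ι i : ℝ) := by exact_mod_cast hgap
    linarith
  have hC : 0 < hgCoeff d b ι := hgCoeff_pos hb ι
  have hx0 : 0 < x := lt_of_lt_of_le hy0 hyx
  have h5 : hgCoeff d b ι' * x ≤ hgCoeff d b ι * x := by
    rw [hkey]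
    exact mul_le_mul_of_nonneg_left hyx (le_of_lt hC)
  exact le_of_mul_le_mul_right h5 hx0

lemma exists_move_indices {d : ℕ} {ι : Fin d → ℕ} (hanti : Antitone ι)
    {a c : Fin d} (hgap : ι c + 2 ≤ ι a) :
    ∃ i j : Fin d, i < j ∧ ι j + 2 ≤ ι i ∧
      (∀ l, i < l → ι l < ι i) ∧ (∀ l, l < j → ι j < ι l) := by
  classical
  have hd : 0 < d := a.pos
  set top : Fin d := ⟨0, hd⟩ with htop
  set bot : Fin d := ⟨d - 1, by omega⟩ with hbot
  have hle_top : ∀ l, top ≤ l := fun l => Fin.mk_le_of_le_val (Nat.zero_le _)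
  have hle_bot : ∀ l : Fin d, l ≤ bot := fun l => by
    rw [Fin.le_def]
    have := l.2
    simp only [hbot]
    omega
  have htop_max : ∀ l, ι l ≤ ι top := fun l => hanti (hle_top l)
  have hbot_min : ∀ l, ι bot ≤ ι l := fun l => hanti (hle_bot l)
  set S : Finset (Fin d) := Finset.univ.filter (fun l => ι top ≤ ι l) with hS
  set T : Finset (Fin d) := Finset.univ.filter (fun l => ι l ≤ ι bot) with hT
  have hSne : S.Nonempty := ⟨top, by simp [hS]⟩
  have hTne : T.Nonempty := ⟨bot, by simp [hT]⟩
  set i : Fin d := S.max' hSne with hi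
  set j : Fin d := T.min' hTne with hj
  have hiS : i ∈ S := S.max'_mem hSne
  have hjT : j ∈ T := T.min'_mem hTne
  have hival : ι i = ι top :=
    le_antisymm (htop_max i) ((Finset.mem_filter.mp hiS).2)
  have hjval : ι j = ι bot :=
    le_antisymm ((Finset.mem_filter.mp hjT).2) (hbot_min j)
  have hgap' : ι j + 2 ≤ ι i := by
    rw [hival, hjval]
    calc ι bot + 2 ≤ ι c + 2 := by have := hbot_min c; omega
      _ ≤ ι a := hgap
      _ ≤ ι top := htop_max a
  have hij : i < j := by
    rcases lt_or_ge i j with h | h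
    · exact h
    · exfalso
      have := hanti h
      omega
  refine ⟨i, j, hij, hgap', ?_, ?_⟩
  · intro l hl
    have h1 : ι l ≤ ι i := hanti (le_of_lt hl)
    rcases eq_or_lt_of_le h1 with h2 | h2
    · exfalso
      have hlS : l ∈ S := by
        rw [hS, Finset.mem_filter]
        exact ⟨Finset.mem_univ l, by rw [← hival, h2]⟩
      have := S.le_max' l hlS
      rw [← hi] at this
      exact absurd this (not_le.mpr hl)
    · exact h2
  · intro l hl
    have h1 : ι j ≤ ι l := hanti (le_of_lt hl)
    rcases eq_or_lt_of_le h1 with h2 | h2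
    · exfalso
      have hlT : l ∈ T := by
        rw [hT, Finset.mem_filter]
        exact ⟨Finset.mem_univ l, by rw [← h2, hjval]⟩
      have := T.min'_le l hlT
      rw [← hj] at this
      exact absurd this (not_le.mpr hl)
    · exact h2

lemma hgCoeff_min {d : ℕ} {b : ℝ} (hb : ((d : ℝ) - 1) / 2 < b)
    {K : ℕ} {ιhat : Fin d → ℕ} (hιhat : IsSmallestPartition d K ιhat) :
    ∀ ι : Fin d → ℕ, IsPartitionOf d K ι → hgCoeff d b ιhat ≤ hgCoeff d b ι := by
  suffices H : ∀ n : ℕ, ∀ ι : Fin d → ℕ, IsPartitionOf d K ι →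
      (∑ l : Fin d, (d - 1 - l.val) * ι l) = n → hgCoeff d b ιhat ≤ hgCoeff d b ι by
    intro ι hι; exact H _ ι hι rfl
  intro n
  induction n using Nat.strong_induction_on with
  | _ n IH =>
    intro ι hι hμ
    by_cases heq : ι = ιhat
    · rw [heq]
    have hlex := hιhat.2 ι hι heq
    by_cases hgap : ∃ a c : Fin d, ι c + 2 ≤ ι a
    · obtain ⟨a, c, hac⟩ := hgap
      obtain ⟨i, j, hij, hg, hii, hjj⟩ := exists_move_indices hι.1 hac
      obtain ⟨ι', h1, h2, h3, h4⟩ := move_lemma hb hι.1 hij hg hii hjj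
      have hι'p : IsPartitionOf d K ι' := ⟨h1, by rw [h2]; exact hι.2⟩
      subst hμ
      exact le_trans (IH _ h3 ι' hι'p rfl) h4
    · exfalso
      push_neg at hgap
      obtain ⟨i, hi, hpre⟩ := hlex
      have hlt : ∑ l, ιhat l < ∑ l, ι l := by
        apply Finset.sum_lt_sum
        · intro l _
          rcases lt_trichotomy l i with h | h | h
          · exact le_of_eq (hpre l h)
          · rw [h]; exact le_of_lt hi
          · have h1 : ιhat l ≤ ιhat i := hιhat.1.1 (le_of_lt h)
            have h2 : ι i < ι l + 2 := hgap i l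
            omega
        · exact ⟨i, Finset.mem_univ i, hi⟩
      rw [hιhat.1.2, hι.2] at hlt
      exact lt_irrefl K hlt

lemma decrement_lemma {d : ℕ} (hd : 1 ≤ d) {b : ℝ} (hb : ((d : ℝ) - 1) / 2 < b)
    {ι : Fin d → ℕ} (hanti : Antitone ι) {K : ℕ} (hsum : ∑ l, ι l = K)
    (hK : d + 1 ≤ K) :
    ∃ ι' : Fin d → ℕ, Antitone ι' ∧ (∑ l, ι' l) = K - 1 ∧
      hgCoeff d b ι' ≤ hgCoeff d b ι := by
  classical
  set top : Fin d := ⟨0, hd⟩ with htop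
  have hle_top : ∀ l, top ≤ l := fun l => Fin.mk_le_of_le_val (Nat.zero_le _)
  have htop_max : ∀ l, ι l ≤ ι top := fun l => hanti (hle_top l)
  have htop2 : 2 ≤ ι top := by
    by_contra h
    have : ∀ l ∈ Finset.univ, ι l ≤ 1 := fun l _ => by have := htop_max l; omega
    have h2 := Finset.sum_le_card_nsmul Finset.univ ι 1 this
    rw [show (Finset.univ.sum ι) = ∑ l, ι l from rfl, hsum] at h2
    simp at h2
    omega
  set S : Finset (Fin d) := Finset.univ.filter (fun l => ι top ≤ ι l) with hS
  have hSne : S.Nonempty := ⟨top, by simp [hS]⟩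
  set i : Fin d := S.max' hSne with hi
  have hiS : i ∈ S := S.max'_mem hSne
  have hival : ι i = ι top :=
    le_antisymm (htop_max i) ((Finset.mem_filter.mp hiS).2)
  have hii : ∀ l, i < l → ι l < ι i := by
    intro l hl
    have h1 : ι l ≤ ι i := hanti (le_of_lt hl)
    rcases eq_or_lt_of_le h1 with h2 | h2
    · exfalso
      have hlS : l ∈ S := by
        rw [hS, Finset.mem_filter]
        exact ⟨Finset.mem_univ l, by rw [← hival, h2]⟩
      have := S.le_max' l hlS
      rw [← hi] at this
      exact absurd this (not_le.mpr hl)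
    · exact h2
  set ι' : Fin d → ℕ := Function.update ι i (ι i - 1) with hι'
  have hι'i : ι' i = ι i - 1 := by simp [hι']
  have hι'o : ∀ l, l ≠ i → ι' l = ι l := by
    intro l hli
    simp [hι', Function.update_of_ne hli]
  have hanti' : Antitone ι' := by
    intro a c hac
    rcases eq_or_lt_of_le hac with h | h
    · rw [h]
    by_cases hci : c = i
    · have h2 : a < i := hci ▸ h
      rw [hci, hι'i, hι'o a (ne_of_lt h2)]
      have := hanti (le_of_lt h2)
      omega
    by_cases hai : a = i
    · have h2 : i < c := hai ▸ h
      rw [hai, hι'i, hι'o c hci]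
      have := hii c h2
      omega
    · rw [hι'o c hci, hι'o a hai]
      exact hanti hac
  have hsum' : (∑ l, ι' l) = K - 1 := by
    have key : ∀ l, ι' l + (if l = i then 1 else 0) = ι l := by
      intro l
      by_cases hli : l = i
      · rw [hli, hι'i, if_pos rfl]
        have : 2 ≤ ι i := by rw [hival]; exact htop2
        omega
      · rw [hι'o l hli, if_neg hli]
        omega
    have h2 := Finset.sum_congr rfl (fun l (_ : l ∈ Finset.univ) => key l)
    rw [Finset.sum_add_distrib] at h2
    simp only [Finset.sum_ite_eq', Finset.mem_univ, if_true] at h2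
    rw [show (Finset.univ.sum fun l => ι l) = ∑ l, ι l from rfl, hsum] at h2
    omega
  refine ⟨ι', hanti', hsum', ?_⟩
  set x : ℝ := b - i.val / 2 + ((ι i : ℝ) - 1) with hx
  have hkey : hgCoeff d b ι' * x = hgCoeff d b ι := by
    have key : ∀ l : Fin d, (ascPochhammer ℝ (ι' l)).eval (b - l.val / 2) *
        (if l = i then x else 1)
        = (ascPochhammer ℝ (ι l)).eval (b - l.val / 2) := by
      intro l
      by_cases hli : l = i
      · rw [hli, hι'i, if_pos rfl]
        have h1 : ι i = (ι i - 1) + 1 := by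
          have : 2 ≤ ι i := by rw [hival]; exact htop2
          omega
        conv_rhs => rw [h1]
        rw [ascPoch_succ_eval]
        have h3 : ((ι i - 1 : ℕ) : ℝ) = (ι i : ℝ) - 1 := by
          have : 1 ≤ ι i := by rw [hival]; omega
          push_cast [this]
          ring
        rw [h3, hx]
      · rw [hι'o l hli, if_neg hli, mul_one]
    have h2 := Finset.prod_congr rfl (fun l (_ : l ∈ Finset.univ) => key l)
    rw [Finset.prod_mul_distrib] at h2
    simp only [Finset.prod_ite_eq', Finset.mem_univ, if_true] at h2
    exact h2
  have hx1 : 1 ≤ x := by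
    rw [hx]
    have h1 : 0 < b - i.val / 2 := base_pos hb i
    have h2 : (2 : ℝ) ≤ (ι i : ℝ) := by
      have : 2 ≤ ι i := by rw [hival]; exact htop2
      exact_mod_cast this
    linarith
  have hC' : 0 < hgCoeff d b ι' := hgCoeff_pos hb ι'
  calc hgCoeff d b ι' = hgCoeff d b ι' * 1 := by ring
    _ ≤ hgCoeff d b ι' * x := by
        exact mul_le_mul_of_nonneg_left hx1 (le_of_lt hC')
    _ = hgCoeff d b ι := hkey

lemma hgCoeff_ge {d : ℕ} (hd : 1 ≤ d) {b : ℝ} (hb : ((d : ℝ) - 1) / 2 < b)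
    {K : ℕ} (hK : d ≤ K) {ιhat : Fin d → ℕ} (hιhat : IsSmallestPartition d K ιhat) :
    ∀ n : ℕ, ∀ ι : Fin d → ℕ, IsPartitionOf d (n + K) ι →
      hgCoeff d b ιhat ≤ hgCoeff d b ι := by
  intro n
  induction n with
  | zero => intro ι hι; exact hgCoeff_min hb hιhat ι (by simpa using hι)
  | succ n IH =>
    intro ι hι
    obtain ⟨ι', h1, h2, h3⟩ := decrement_lemma hd hb hι.1 hι.2 (by omega)
    have : (n + 1 + K) - 1 = n + K := by omega
    rw [this] at h2
    exact le_trans (IH ι' ⟨h1, h2⟩) h3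

theorem hypergeometric_truncation_bound (d : ℕ) (hd : 1 ≤ d) (b : ℝ)
    (hb : ((d : ℝ) - 1) / 2 < b) (m : ℕ) (hm : d - 1 ≤ m) (s : ℝ) (hs : 0 ≤ s)
    (z : (Fin d → ℕ) → ℂ) (c : (Fin d → ℕ) → ℝ)
    (hzc : ∀ k : ℕ, ∀ ι ∈ partitionFinset d k, 0 ≤ c ι ∧ ‖z ι‖ ≤ c ι)
    (hcsum : ∀ k : ℕ, ∑ ι ∈ partitionFinset d k, c ι = s ^ k)
    (ιhat : Fin d → ℕ) (hιhat : IsSmallestPartition d (m + 1) ιhat) :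
    Summable (fun k : ℕ =>
      ∑ ι ∈ partitionFinset d k,
        ‖z ι / ((k.factorial : ℂ) * (hgCoeff d b ι : ℂ))‖) ∧
    ‖∑' n : ℕ, ∑ ι ∈ partitionFinset d (n + (m + 1)),
        z ι / (((n + (m + 1)).factorial : ℂ) * (hgCoeff d b ι : ℂ))‖ ≤
      s ^ (m + 1) * Real.exp s / ((m + 1).factorial * hgCoeff d b ιhat) := by
  have hB : 0 < hgCoeff d b ιhat := hgCoeff_pos hb ιhat
  set B := hgCoeff d b ιhat with hBdef
  have hKd : d ≤ m + 1 := by omega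
  have hge : ∀ n : ℕ, ∀ ι : Fin d → ℕ, IsPartitionOf d (n + (m + 1)) ι →
      B ≤ hgCoeff d b ι := hgCoeff_ge hd hb hKd hιhat
  set F : ℕ → ℝ := fun k => ∑ ι ∈ partitionFinset d k,
      ‖z ι / ((k.factorial : ℂ) * (hgCoeff d b ι : ℂ))‖ with hF
  have hFnonneg : ∀ k, 0 ≤ F k := fun k => Finset.sum_nonneg fun ι _ => norm_nonneg _
  have hFbound : ∀ n : ℕ, F (n + (m + 1)) ≤
      s ^ (n + (m + 1)) / ((n + (m + 1)).factorial * B) := by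
    intro n
    set k := n + (m + 1) with hk
    have hkfac : (0 : ℝ) < (k.factorial : ℝ) := by exact_mod_cast k.factorial_pos
    have step : ∀ ι ∈ partitionFinset d k,
        ‖z ι / ((k.factorial : ℂ) * (hgCoeff d b ι : ℂ))‖ ≤ c ι / (k.factorial * B) := by
      intro ι hmem
      have hιpart := mem_partitionFinset.mp hmem
      have hw : 0 < hgCoeff d b ι := hgCoeff_pos hb ι
      have hBw : B ≤ hgCoeff d b ι := hge n ι hιpart
      have hnorm : ‖z ι / ((k.factorial : ℂ) * (hgCoeff d b ι : ℂ))‖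
          = ‖z ι‖ / (k.factorial * hgCoeff d b ι) := by
        rw [norm_div, norm_mul, Complex.norm_natCast, Complex.norm_real,
          Real.norm_eq_abs, abs_of_pos hw]
      rw [hnorm]
      obtain ⟨hc0, hzle⟩ := hzc k ι hmem
      apply div_le_div₀ hc0 hzle
      · positivity
      · exact mul_le_mul_of_nonneg_left hBw (le_of_lt hkfac)
    calc F k ≤ ∑ ι ∈ partitionFinset d k, c ι / (k.factorial * B) :=
          Finset.sum_le_sum step
      _ = (∑ ι ∈ partitionFinset d k, c ι) / (k.factorial * B) := by
          rw [Finset.sum_div]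
      _ = s ^ k / (k.factorial * B) := by rw [hcsum k]
  set g : ℕ → ℝ := fun n => s ^ (m + 1) / ((m + 1).factorial * B) * (s ^ n / n.factorial)
    with hgdef
  have hg_sum : Summable g := (Real.summable_pow_div_factorial s).mul_left _
  have hcomp : ∀ n : ℕ, s ^ (n + (m + 1)) / ((n + (m + 1)).factorial * B) ≤ g n := by
    intro n
    have hfle : ((m + 1).factorial * n.factorial : ℝ) ≤ ((n + (m + 1)).factorial : ℝ) := by
      have h1 := Nat.factorial_mul_factorial_dvd_factorial_add (m + 1) n
      have h2 := Nat.le_of_dvd (Nat.factorial_pos _) h1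
      have h3 : m + 1 + n = n + (m + 1) := by omega
      rw [h3] at h2
      exact_mod_cast h2
    have hfpos : (0 : ℝ) < ((m + 1).factorial * n.factorial : ℝ) := by
      have := (m + 1).factorial_pos
      have := n.factorial_pos
      positivity
    have heq : g n = s ^ (n + (m + 1)) / (((m + 1).factorial * n.factorial) * B) := by
      rw [hgdef]
      have h1 : ((m + 1).factorial : ℝ) ≠ 0 := by positivity
      have h2 : (n.factorial : ℝ) ≠ 0 := by positivity
      have h3 : B ≠ 0 := ne_of_gt hB
      field_simp
      rw [pow_add]
      ring
    rw [heq]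
    apply div_le_div_of_nonneg_left (by positivity) (by positivity)
    exact mul_le_mul_of_nonneg_right hfle (le_of_lt hB)
  have hFg : ∀ n : ℕ, F (n + (m + 1)) ≤ g n := fun n => le_trans (hFbound n) (hcomp n)
  have hsummF : Summable F := by
    rw [← summable_nat_add_iff (m + 1)]
    exact Summable.of_nonneg_of_le (fun n => hFnonneg _) hFg hg_sum
  refine ⟨hsummF, ?_⟩
  set T : ℕ → ℂ := fun n => ∑ ι ∈ partitionFinset d (n + (m + 1)),
      z ι / (((n + (m + 1)).factorial : ℂ) * (hgCoeff d b ι : ℂ)) with hT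
  have hTnorm : ∀ n, ‖T n‖ ≤ F (n + (m + 1)) := fun n => norm_sum_le _ _
  have hTg : ∀ n, ‖T n‖ ≤ g n := fun n => le_trans (hTnorm n) (hFg n)
  have hTsum : Summable fun n => ‖T n‖ :=
    Summable.of_nonneg_of_le (fun n => norm_nonneg _) hTg hg_sum
  have hexp : Real.exp s = ∑' n : ℕ, s ^ n / n.factorial := by
    rw [Real.exp_eq_exp_ℝ, NormedSpace.exp_eq_tsum_div]
  calc ‖∑' n, T n‖ ≤ ∑' n, ‖T n‖ := norm_tsum_le_tsum_norm hTsum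
    _ ≤ ∑' n, g n := Summable.tsum_le_tsum hTg hTsum hg_sum
    _ = s ^ (m + 1) / ((m + 1).factorial * B) * ∑' n : ℕ, (s ^ n / n.factorial) :=
        tsum_mul_left
    _ = s ^ (m + 1) * Real.exp s / ((m + 1).factorial * B) := by
        rw [hexp]; ring
end

section
/- Let κ, σ, ρ, T be real numbers with σ ≠ 0 and T > 0, let u ∈ ℂ, and let η ∈ ℂ satisfy η² = (κ + uσρ)² − σ²u(u+1) and η ≠ 0. Define D(t) = η(e^{η(T−t)} + 1) + (κ + uσρ)(e^{η(T−t)} − 1), assume D(t) ≠ 0 for all t ∈ [0, T], and set ψ(t) = −u(u+1)(e^{η(T−t)} − 1)/D(t). Then for every t ∈ [0, T], exp((σ²/2) ∫_t^T ψ(s) ds) = D(t) e^{−(1/2)(η + κ + uσρ)(T−t)} / (2η). -/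
/-!
Put `c = κ + uσρ`, `μ = -(η + c)/2` and `G(t) = D(t) e^{μ(T-t)} / (2η)`, so that the claim reads
`exp(∫_t^T (σ²/2) ψ) = G(t)`. Since `D' = -η(η + c) e^{η(T-t)}`, the relation `c² - η² = σ²u(u+1)`
gives `D' + μ D = (σ²/2) u(u+1) (e^{η(T-t)} - 1) = -(σ²/2) ψ D`, i.e. `G` solves the linear
equation `G' = -(σ²/2) ψ G` with `G(T) = 1`. Such a solution is `G(t) = G(T) exp(∫_t^T (σ²/2) ψ)`,
because `G(t) exp(∫_t^s ...)` has zero derivative in `s`.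
-/

open Complex Set
theorem eq_mul_exp_integral_of_hasDerivAt {φ G : ℝ → ℂ} {a b : ℝ} (hab : a ≤ b)
    (hφ : ContinuousOn φ (Icc a b)) (hG : ∀ x ∈ Icc a b, HasDerivAt G (-(φ x * G x)) x) :
    G a = G b * exp (∫ s in a..b, φ s) := by
  set H : ℝ → ℂ := fun t => G t * exp (∫ s in a..t, φ s)
  have hH : ∀ x ∈ Icc a b, HasDerivWithinAt H 0 (Icc a b) x := by
    intro x hx
    -- needed for the `FTCFilter x (𝓝[Icc a b] x) (𝓝[Icc a b] x)` instance
    have : Fact (x ∈ Icc a b) := ⟨hx⟩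
    have hprim : HasDerivWithinAt (fun t => ∫ s in a..t, φ s) (φ x) (Icc a b) x :=
      intervalIntegral.integral_hasDerivWithinAt_right
        ((hφ.mono (uIcc_subset_Icc (left_mem_Icc.2 hab) hx)).intervalIntegrable)
        (hφ.stronglyMeasurableAtFilter_nhdsWithin measurableSet_Icc x) (hφ x hx)
    exact ((hG x hx).hasDerivWithinAt.mul hprim.cexp).congr_deriv (by ring)
  have hconst := constant_of_has_deriv_right_zero (fun x hx => (hH x hx).continuousWithinAt)
    fun x hx => (hH x (Ico_subset_Icc_self hx)).mono_of_mem_nhdsWithin (Icc_mem_nhdsGE_of_mem hx)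
  simpa [H] using (hconst b (right_mem_Icc.2 hab)).symm

theorem hasDerivAt_cexp_mul_sub (z : ℂ) (T x : ℝ) :
    HasDerivAt (fun t : ℝ => exp (z * (T - t))) (-(z * exp (z * (T - x)))) x := by
  have h : HasDerivAt (fun t : ℝ => z * ((T : ℂ) - t)) (-z) x := by
    simpa using ((hasDerivAt_id x).ofReal_comp.const_sub (T : ℂ)).const_mul z
  exact h.cexp.congr_deriv (by ring)

theorem hasDerivAt_heston_denominator (η c : ℂ) (T x : ℝ) :
    HasDerivAt (fun t : ℝ => η * (exp (η * (T - t)) + 1) + c * (exp (η * (T - t)) - 1))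
      (-(η * (η + c) * exp (η * (T - x)))) x := by
  have hE := hasDerivAt_cexp_mul_sub η T x
  exact (((hE.add_const 1).const_mul η).add ((hE.sub_const 1).const_mul c)).congr_deriv (by ring)

theorem heston_integral_psi_general (κ σ ρ T : ℝ)
    (u η : ℂ) (hη2 : η ^ 2 = ((κ : ℂ) + u * σ * ρ) ^ 2 - (σ : ℂ) ^ 2 * u * (u + 1))
    (hη : η ≠ 0)
    (D : ℝ → ℂ)
    (hD : ∀ t : ℝ, D t = η * (Complex.exp (η * (T - t)) + 1) +
      ((κ : ℂ) + u * σ * ρ) * (Complex.exp (η * (T - t)) - 1))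
    (hD0 : ∀ t ∈ Set.Icc (0 : ℝ) T, D t ≠ 0)
    (ψ : ℝ → ℂ)
    (hψ : ∀ t : ℝ, ψ t = -u * (u + 1) * (Complex.exp (η * (T - t)) - 1) / D t) :
    ∀ t ∈ Set.Icc (0 : ℝ) T,
      Complex.exp ((σ : ℂ) ^ 2 / 2 * ∫ s in t..T, ψ s) =
        D t * Complex.exp (-(1 / 2) * (η + (κ : ℂ) + u * σ * ρ) * (T - t)) / (2 * η) := by
  intro t ht
  set μ : ℂ := -(1 / 2) * (η + (κ : ℂ) + u * σ * ρ)
  set G : ℝ → ℂ := fun s => D s * exp (μ * (T - s)) / (2 * η)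
  have hsub : Icc t T ⊆ Icc 0 T := Icc_subset_Icc_left ht.1
  have hD' : ∀ x : ℝ,
      HasDerivAt D (-(η * (η + ((κ : ℂ) + u * σ * ρ)) * exp (η * (T - x)))) x := fun x =>
    funext hD ▸ hasDerivAt_heston_denominator η _ T x
  have hG : ∀ x ∈ Icc t T, HasDerivAt G (-((σ : ℂ) ^ 2 / 2 * ψ x * G x)) x := by
    intro x hx
    have hψD : ψ x * D x = -u * (u + 1) * (exp (η * (T - x)) - 1) := by
      rw [hψ x]; exact div_mul_cancel₀ _ (hD0 x (hsub hx))
    have hDμ : -(η * (η + ((κ : ℂ) + u * σ * ρ)) * exp (η * (T - x))) - μ * D x =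
        -((σ : ℂ) ^ 2 / 2 * (ψ x * D x)) := by
      rw [hψD, hD x]
      linear_combination (-1 / 2 : ℂ) * (exp (η * (T - x)) - 1) * hη2
    refine (((hD' x).mul (hasDerivAt_cexp_mul_sub μ T x)).div_const (2 * η)).congr_deriv ?_
    linear_combination (exp (μ * (T - x)) / (2 * η)) * hDμ
  have hψcont : ContinuousOn ψ (Icc t T) := by
    have hDcont : Continuous D := by rw [funext hD]; fun_prop
    rw [funext hψ]
    exact ContinuousOn.div (by fun_prop) hDcont.continuousOn fun x hx => hD0 x (hsub hx)
  have hGT : G T = 1 := by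
    simp only [G, hD, sub_self, mul_zero, exp_zero]
    field_simp
    ring
  have hGt := eq_mul_exp_integral_of_hasDerivAt (φ := fun s => (σ : ℂ) ^ 2 / 2 * ψ s) ht.2
    (continuousOn_const.mul hψcont) hG
  rw [hGT, one_mul, intervalIntegral.integral_const_mul] at hGt
  exact hGt.symm

theorem heston_integral_psi (κ σ ρ T : ℝ) (hσ : σ ≠ 0) (hT : 0 < T)
    (u η : ℂ) (hη2 : η ^ 2 = ((κ : ℂ) + u * σ * ρ) ^ 2 - (σ : ℂ) ^ 2 * u * (u + 1))
    (hη : η ≠ 0)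
    (D : ℝ → ℂ)
    (hD : ∀ t : ℝ, D t = η * (Complex.exp (η * (T - t)) + 1) +
      ((κ : ℂ) + u * σ * ρ) * (Complex.exp (η * (T - t)) - 1))
    (hD0 : ∀ t ∈ Set.Icc (0 : ℝ) T, D t ≠ 0)
    (ψ : ℝ → ℂ)
    (hψ : ∀ t : ℝ, ψ t = -u * (u + 1) * (Complex.exp (η * (T - t)) - 1) / D t) :
    ∀ t ∈ Set.Icc (0 : ℝ) T,
      Complex.exp ((σ : ℂ) ^ 2 / 2 * ∫ s in t..T, ψ s) =
        D t * Complex.exp (-(1 / 2) * (η + (κ : ℂ) + u * σ * ρ) * (T - t)) / (2 * η) :=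
  heston_integral_psi_general κ σ ρ T u η hη2 hη D hD hD0 ψ hψ
end
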